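/- arXiv:math/0507370 — 7 statements merged into one kernel-verified Lean document; each statement's English description precedes it below -/
import Mathlib

section
/- Let d1, d2 be integers with 2 < d1 < d2 and gcd(d1,d2) = 1. A positive integer t belongs to Δ(d1,d2) if and only if there exists exactly one pair of integers (p,q) with 1 ≤ p ≤ ⌊d2 − d2/d1⌋ and 1 ≤ q ≤ d1 − 1 such that t = d1·d2 − p·d1 − q·d2. Moreover, d1 − 1 ≤ ⌊d2 − d2/d1⌋. -/
/-!
Since `gcd(d1, d2) = 1`, every integer has a unique normal form `t = a*d1 + b*d2` with
`0 ≤ b < d1`, and `t` lies in the semigroup exactly when `a ≥ 0` (reducing `y` modulo `d1`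
turns any representation with `x, y ≥ 0` into the normal form without making `a` negative).
For a gap `t > 0` we therefore have `a < 0` and `b ≠ 0`, and `(p, q) = (-a, d1 - b)` is the
representation sought; the bound `p ≤ ⌊d2 - d2/d1⌋` comes from `t > 0` and `b < d1`.
-/

namespace IsCoprime

variable {d1 d2 : ℤ}

theorem exists_eq_mul_add_mul (hcop : IsCoprime d1 d2) (hd1 : 0 < d1) (t : ℤ) :
    ∃ a b : ℤ, 0 ≤ b ∧ b < d1 ∧ t = a * d1 + b * d2 := by
  obtain ⟨u, v, huv⟩ := hcop
  refine ⟨t * u + t * v / d1 * d2, t * v % d1, Int.emod_nonneg _ hd1.ne',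
    Int.emod_lt_of_pos _ hd1, ?_⟩
  linear_combination (-t) * huv - d2 * Int.mul_ediv_add_emod (t * v) d1

theorem eq_of_mul_add_mul_eq (hcop : IsCoprime d1 d2) {a b a' b' : ℤ} (hb : 0 ≤ b)
    (hbd : b < d1) (hb' : 0 ≤ b') (hbd' : b' < d1) (h : a * d1 + b * d2 = a' * d1 + b' * d2) :
    a = a' ∧ b = b' := by
  have hdvd : d1 ∣ (b' - b) * d2 := ⟨a - a', by linear_combination -h⟩
  have hbb : b' - b = 0 :=
    Int.eq_zero_of_abs_lt_dvd (hcop.dvd_of_dvd_mul_right hdvd) (abs_sub_lt_of_nonneg_of_lt hb' hbd' hb hbd)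
  have haa : (a - a') * d1 = 0 := by linear_combination h + d2 * hbb
  refine ⟨?_, by omega⟩
  rcases mul_eq_zero.1 haa with h | h <;> omega

theorem not_exists_nat_of_neg (hcop : IsCoprime d1 d2) (hd2 : 0 ≤ d2) {a b : ℤ}
    (ha : a < 0) (hb : 0 ≤ b) (hbd : b < d1) :
    ¬ ∃ x y : ℕ, a * d1 + b * d2 = x * d1 + y * d2 := by
  rintro ⟨x, y, hxy⟩
  have hd1 : 0 < d1 := by omega
  have hreduce : (x : ℤ) * d1 + y * d2 = (x + y / d1 * d2) * d1 + y % d1 * d2 := by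
    linear_combination d2 * (Int.mul_ediv_add_emod (y : ℤ) d1).symm
  obtain ⟨rfl, -⟩ := hcop.eq_of_mul_add_mul_eq hb hbd (Int.emod_nonneg _ hd1.ne')
    (Int.emod_lt_of_pos _ hd1) (hxy.trans hreduce)
  have : 0 ≤ (y : ℤ) / d1 * d2 := mul_nonneg (Int.ediv_nonneg y.cast_nonneg hd1.le) hd2
  omega

end IsCoprime

theorem le_floor_sub_div_iff {d1 : ℤ} (hd1 : 0 < d1) (d2 p : ℤ) :
    p ≤ ⌊(d2 : ℚ) - (d2 : ℚ) / (d1 : ℚ)⌋ ↔ d2 ≤ (d2 - p) * d1 := by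
  rw [Int.le_floor, le_sub_comm, div_le_iff₀ (by exact_mod_cast hd1)]
  exact_mod_cast Iff.rfl

/-- For `2 < d1 < d2` coprime, a positive integer `t` is a gap of the numerical
semigroup generated by `d1, d2` iff it is uniquely representable as
`t = d1*d2 - p*d1 - q*d2` with `1 ≤ p ≤ ⌊d2 - d2/d1⌋` and `1 ≤ q ≤ d1 - 1`.
Moreover `d1 - 1 ≤ ⌊d2 - d2/d1⌋`. -/
theorem gap_unique_matrix_representation (d1 d2 : ℤ) (h1 : 2 < d1) (h2 : d1 < d2)
    (hcop : IsCoprime d1 d2) (t : ℤ) (ht : 0 < t) :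
    ((¬ ∃ x y : ℕ, t = x * d1 + y * d2) ↔
      (∃! pq : ℤ × ℤ, 1 ≤ pq.1 ∧ pq.1 ≤ ⌊(d2 : ℚ) - (d2 : ℚ) / (d1 : ℚ)⌋ ∧
        1 ≤ pq.2 ∧ pq.2 ≤ d1 - 1 ∧ t = d1 * d2 - pq.1 * d1 - pq.2 * d2)) ∧
    d1 - 1 ≤ ⌊(d2 : ℚ) - (d2 : ℚ) / (d1 : ℚ)⌋ := by
  have hd1 : 0 < d1 := by omega
  refine ⟨⟨fun hgap => ?_, ?_⟩, (le_floor_sub_div_iff hd1 d2 _).2 (by nlinarith)⟩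
  · obtain ⟨a, b, hb, hbd, rfl⟩ := hcop.exists_eq_mul_add_mul hd1 t
    have ha : a < 0 := by
      by_contra! ha
      exact hgap ⟨a.toNat, b.toNat, by simp [ha, hb]⟩
    have hb0 : b ≠ 0 := by
      rintro rfl
      nlinarith
    refine ⟨(-a, d1 - b), ⟨by omega, (le_floor_sub_div_iff hd1 d2 _).2 (by nlinarith),
      by omega, by omega, by dsimp only; ring⟩, ?_⟩
    rintro ⟨p, q⟩ ⟨-, -, hq, hqd, hpq⟩
    dsimp only at hq hqd hpq
    have hrep : a * d1 + b * d2 = -p * d1 + (d1 - q) * d2 := by linear_combination hpq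
    obtain ⟨hap, hbq⟩ := hcop.eq_of_mul_add_mul_eq hb hbd (by omega) (by omega) hrep
    ext <;> dsimp <;> omega
  · rintro ⟨⟨p, q⟩, ⟨hp, -, hq, hqd, rfl⟩, -⟩
    have hform : d1 * d2 - p * d1 - q * d2 = -p * d1 + (d1 - q) * d2 := by ring
    rw [hform]
    exact hcop.not_exists_nat_of_neg (by omega) (by omega) (by omega) (by omega)
end

section
/- Let d1, d2 be integers with 2 < d1 < d2 and gcd(d1,d2) = 1, let d3 be a positive integer with d3 ∉ S(d1,d2), and let a33 = min{v ∈ ℕ : v ≥ 2, v·d3 ∈ S(d1,d2)}. Define, for real z with 0 < z < 1, Ψ3(z) = z^{d3}/(1 − z^{d3}) − Σ_{s} z^s, where the sum runs over all positive integers s that are divisible by d3 and belong to Δ(d1,d2). Then the limit of ln Ψ3(z) / ln z as z → 0⁺ exists and equals a33·d3; in particular a33 = (1/d3)·lim_{z→0⁺} ln Ψ3(z)/ln z. -/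
open Filter Topology

/-!
Since `z^{d3}/(1 - z^{d3})` is the sum of `z^s` over all positive multiples `s` of `d3`, `Ψ3(z)` is
the sum of `z^s` over the positive multiples of `d3` lying in `S(d1,d2)`. As `d3 ∉ S(d1,d2)`, the
least of these is `a33·d3`, so `z^{a33·d3} ≤ Ψ3(z) ≤ z^{a33·d3}/(1 - z)`; taking logarithms gives
the limit.
-/

lemma tendsto_log_div_log_of_pow_bounds (f : ℝ → ℝ) (N : ℕ) {c C : ℝ} (hc : 0 < c)
    (hlo : ∀ᶠ z in 𝓝[>] 0, c * z ^ N ≤ f z) (hhi : ∀ᶠ z in 𝓝[>] 0, f z ≤ C * z ^ N) :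
    Tendsto (fun z => Real.log (f z) / Real.log z) (𝓝[>] 0) (𝓝 N) := by
  have hconst (a : ℝ) :
      Tendsto (fun z => N + Real.log a / Real.log z) (𝓝[>] (0 : ℝ)) (𝓝 N) := by
    simpa using tendsto_const_nhds.add (tendsto_const_nhds.div_atBot Real.tendsto_log_nhdsGT_zero)
  have hlog : ∀ᶠ z in 𝓝[>] (0 : ℝ), Real.log z < 0 ∧
      N * Real.log z + Real.log c ≤ Real.log (f z) ∧
      Real.log (f z) ≤ N * Real.log z + Real.log C := by
    filter_upwards [hlo, hhi, Ioo_mem_nhdsGT one_pos] with z hlo hhi ⟨hz0, hz1⟩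
    have hzN : 0 < z ^ N := by positivity
    have hfz : 0 < f z := (by positivity : 0 < c * z ^ N).trans_le hlo
    have hC : 0 < C := pos_of_mul_pos_left (hfz.trans_le hhi) hzN.le
    refine ⟨Real.log_neg hz0 hz1, ?_, ?_⟩
    · calc N * Real.log z + Real.log c = Real.log (c * z ^ N) := by
            rw [Real.log_mul hc.ne' hzN.ne', Real.log_pow, add_comm]
        _ ≤ Real.log (f z) := Real.log_le_log (by positivity) hlo
    · calc Real.log (f z) ≤ Real.log (C * z ^ N) := Real.log_le_log hfz hhi
        _ = N * Real.log z + Real.log C := by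
            rw [Real.log_mul hC.ne' hzN.ne', Real.log_pow, add_comm]
  refine tendsto_of_tendsto_of_tendsto_of_le_of_le' (hconst C) (hconst c) ?_ ?_ <;>
    filter_upwards [hlog] with z ⟨hlz, hfc, hfC⟩
  · rwa [le_div_iff_of_neg hlz, add_mul, div_mul_cancel₀ _ hlz.ne]
  · rwa [div_le_iff_of_neg hlz, add_mul, div_mul_cancel₀ _ hlz.ne]

lemma tsum_pos_multiples_pow {r : ℝ} (hr0 : 0 ≤ r) (hr1 : r < 1) {d : ℕ} (hd : 0 < d) :
    ∑' s : {s : ℕ | 0 < s ∧ d ∣ s}, r ^ (s : ℕ) = r ^ d / (1 - r ^ d) := by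
  have hrange : {s : ℕ | 0 < s ∧ d ∣ s} = Set.range (fun k : ℕ => d * (k + 1)) := by
    ext s
    constructor
    · rintro ⟨hs, k, rfl⟩
      exact ⟨k - 1, by simp only [Nat.sub_add_cancel (Nat.pos_of_mul_pos_left hs)]⟩
    · rintro ⟨k, rfl⟩
      exact ⟨by positivity, dvd_mul_right d _⟩
  have hinj : Function.Injective (fun k : ℕ => d * (k + 1)) := fun a b h => by
    simpa using Nat.eq_of_mul_eq_mul_left hd h
  rw [hrange, tsum_range (fun s => r ^ s) hinj]
  simp only [pow_mul, pow_succ]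
  rw [tsum_mul_right, tsum_geometric_of_lt_one (by positivity) (pow_lt_one₀ hr0 hr1 hd.ne'),
    div_eq_inv_mul]

lemma tsum_pos_multiples_pow_sub_tsum_notMem {r : ℝ} (hr0 : 0 ≤ r) (hr1 : r < 1) {d : ℕ}
    (hd : 0 < d) (S : Set ℕ) :
    r ^ d / (1 - r ^ d) - ∑' s : {s : ℕ | 0 < s ∧ d ∣ s ∧ s ∉ S}, r ^ (s : ℕ) =
      ∑' s : {s : ℕ | 0 < s ∧ d ∣ s ∧ s ∈ S}, r ^ (s : ℕ) := by
  have hsplit : {s : ℕ | 0 < s ∧ d ∣ s} =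
      {s : ℕ | 0 < s ∧ d ∣ s ∧ s ∈ S} ∪ {s : ℕ | 0 < s ∧ d ∣ s ∧ s ∉ S} := by
    ext s
    simp only [Set.mem_ofPred_eq, Set.mem_union]
    tauto
  have hdisj : Disjoint {s : ℕ | 0 < s ∧ d ∣ s ∧ s ∈ S} {s : ℕ | 0 < s ∧ d ∣ s ∧ s ∉ S} :=
    Set.disjoint_left.mpr fun _ hs ht => ht.2.2 hs.2.2
  have hsum := summable_geometric_of_lt_one hr0 hr1
  rw [← tsum_pos_multiples_pow hr0 hr1 hd, hsplit,
    Summable.tsum_union_disjoint hdisj (hsum.subtype _) (hsum.subtype _), add_sub_cancel_right]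

lemma pow_le_tsum_subtype_pow {r : ℝ} (hr0 : 0 ≤ r) (hr1 : r < 1) {T : Set ℕ} {N : ℕ}
    (hN : N ∈ T) : r ^ N ≤ ∑' s : T, r ^ (s : ℕ) :=
  (summable_geometric_of_lt_one hr0 hr1).subtype T |>.le_tsum ⟨N, hN⟩ fun _ _ => pow_nonneg hr0 _

lemma tsum_subtype_pow_le {r : ℝ} (hr0 : 0 ≤ r) (hr1 : r < 1) {T : Set ℕ} {N : ℕ}
    (hN : N ∈ lowerBounds T) : ∑' s : T, r ^ (s : ℕ) ≤ r ^ N / (1 - r) := by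
  have hsum := summable_geometric_of_lt_one hr0 hr1
  have hinj : Function.Injective (fun s : T => (s : ℕ) - N) := fun a b h =>
    Subtype.ext (by have := hN a.2; have := hN b.2; simp only at h; omega)
  calc ∑' s : T, r ^ (s : ℕ) ≤ ∑' k : ℕ, r ^ N * r ^ k :=
        (hsum.subtype T).tsum_le_tsum_of_inj _ hinj (fun _ _ => by positivity)
          (fun s => by rw [← pow_add, Nat.add_sub_cancel' (hN s.2)]) (hsum.mul_left _)
    _ = r ^ N / (1 - r) := by rw [tsum_mul_left, tsum_geometric_of_lt_one hr0 hr1, div_eq_mul_inv]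

lemma isLeast_pos_multiples_mem (S : Set ℕ) {d : ℕ} (hd : d ∉ S)
    (hne : ∃ v, 2 ≤ v ∧ v * d ∈ S) :
    IsLeast {s : ℕ | 0 < s ∧ d ∣ s ∧ s ∈ S} (sInf {v : ℕ | 2 ≤ v ∧ v * d ∈ S} * d) := by
  obtain ⟨ha2, haS⟩ : 2 ≤ sInf {v : ℕ | 2 ≤ v ∧ v * d ∈ S} ∧ _ * d ∈ S := Nat.sInf_mem hne
  have hd0 : 0 < d := Nat.pos_of_ne_zero fun h => hd (by simpa [h] using haS)
  refine ⟨⟨by positivity, dvd_mul_left _ _, haS⟩, ?_⟩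
  rintro _ ⟨hs, ⟨k, rfl⟩, hkS⟩
  have hk2 : 2 ≤ k := by
    rcases k with _ | _ | k
    · simp at hs
    · simp at hkS; exact absurd hkS hd
    · omega
  rw [mul_comm d k]
  exact Nat.mul_le_mul_right d (Nat.sInf_le ⟨hk2, by rwa [mul_comm]⟩)

theorem a33_analytic_representation_general (d1 d2 d3 : ℕ) (h1 : 2 < d1) (hd3 : 0 < d3)
    (hnot : ¬ ∃ x y : ℕ, d3 = x * d1 + y * d2) (a33 : ℕ)
    (ha33 : a33 = sInf {v : ℕ | 2 ≤ v ∧ ∃ x y : ℕ, v * d3 = x * d1 + y * d2})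
    (Ψ3 : ℝ → ℝ)
    (hΨ3 : ∀ z : ℝ, 0 < z → z < 1 →
      Ψ3 z = z ^ d3 / (1 - z ^ d3) -
        ∑' s : {s : ℕ | 0 < s ∧ d3 ∣ s ∧ ¬ ∃ x y : ℕ, s = x * d1 + y * d2},
          z ^ (s : ℕ)) :
    Tendsto (fun z : ℝ => Real.log (Ψ3 z) / Real.log z) (𝓝[>] 0)
      (𝓝 ((a33 * d3 : ℕ) : ℝ)) := by
  set S : Set ℕ := {s | ∃ x y : ℕ, s = x * d1 + y * d2}
  set T : Set ℕ := {s | 0 < s ∧ d3 ∣ s ∧ s ∈ S}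
  have hleast : IsLeast T (a33 * d3) := by
    rw [ha33]
    exact isLeast_pos_multiples_mem S hnot ⟨d1, h1.le, d3, 0, by ring⟩
  have hΨ : ∀ z : ℝ, 0 < z → z < 1 → Ψ3 z = ∑' s : T, z ^ (s : ℕ) := fun z hz0 hz1 => by
    rw [hΨ3 z hz0 hz1]
    exact tsum_pos_multiples_pow_sub_tsum_notMem hz0.le hz1 hd3 S
  refine tendsto_log_div_log_of_pow_bounds Ψ3 _ (c := 1) (C := 2) one_pos ?_ ?_
  · filter_upwards [Ioo_mem_nhdsGT one_pos] with z ⟨hz0, hz1⟩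
    rw [one_mul, hΨ z hz0 hz1]
    exact pow_le_tsum_subtype_pow hz0.le hz1 hleast.1
  · filter_upwards [Ioo_mem_nhdsGT (by norm_num : (0 : ℝ) < 1 / 2)] with z ⟨hz0, hz1⟩
    rw [hΨ z hz0 (by linarith)]
    calc ∑' s : T, z ^ (s : ℕ) ≤ z ^ (a33 * d3) / (1 - z) :=
          tsum_subtype_pow_le hz0.le (by linarith) hleast.2
      _ ≤ 2 * z ^ (a33 * d3) := by
          rw [div_le_iff₀ (by linarith)]
          nlinarith [pow_nonneg hz0.le (a33 * d3)]

/-- For `2 < d1 < d2` coprime and `d3 ∉ S(d1,d2)` positive, with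
`a33 = min {v ≥ 2 : v·d3 ∈ S(d1,d2)}` and
`Ψ3(z) = z^{d3}/(1 − z^{d3}) − Σ z^s` (sum over positive `s` divisible by `d3`
with `s ∈ Δ(d1,d2)`), the limit of `ln Ψ3(z)/ln z` as `z → 0⁺` equals `a33·d3`. -/
theorem a33_analytic_representation (d1 d2 d3 : ℕ) (h1 : 2 < d1) (h2 : d1 < d2)
    (hcop : Nat.Coprime d1 d2) (hd3 : 0 < d3)
    (hnot : ¬ ∃ x y : ℕ, d3 = x * d1 + y * d2) (a33 : ℕ)
    (ha33 : a33 = sInf {v : ℕ | 2 ≤ v ∧ ∃ x y : ℕ, v * d3 = x * d1 + y * d2})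
    (Ψ3 : ℝ → ℝ)
    (hΨ3 : ∀ z : ℝ, 0 < z → z < 1 →
      Ψ3 z = z ^ d3 / (1 - z ^ d3) -
        ∑' s : {s : ℕ | 0 < s ∧ d3 ∣ s ∧ ¬ ∃ x y : ℕ, s = x * d1 + y * d2},
          z ^ (s : ℕ)) :
    Tendsto (fun z : ℝ => Real.log (Ψ3 z) / Real.log z) (𝓝[>] 0)
      (𝓝 ((a33 * d3 : ℕ) : ℝ)) :=
  a33_analytic_representation_general d1 d2 d3 h1 hd3 hnot a33 ha33 Ψ3 hΨ3
end

section
/- Let d1, d2 be coprime integers with d1, d2 ≥ 2, let d3 be a positive integer, set w = exp(2πi/d3), and let H12(z) = (1 − z^{d1·d2})/((1 − z^{d1})(1 − z^{d2})). Then for every complex z with |z| < 1, Σ_{s} z^s = 1/(1 − z^{d3}) − (1/d3) Σ_{k=0}^{d3−1} H12(z·w^k), where the sum on the left runs over all positive integers s divisible by d3 that do not belong to S(d1,d2), i.e. over Δ(d1,d2) ∩ S(d3). -/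
/-!
Write `S = S(d₁, d₂)` and `M` for the multiples of `d₃`. Since `0 ∈ S`, the set summed over is
`M \ (S ∩ M)`. The generating function of `M` is `1 / (1 - z ^ d₃)`, and averaging the generating
function `H₁₂` of `S` over the rotations `z ↦ z w ^ k` keeps exactly the exponents in `M`, because
`∑ₖ w ^ (k s)` is `d₃` or `0` according as `d₃ ∣ s`. Finally `H₁₂` is the generating function of `S`
because every element of `S` is uniquely `x d₁ + y d₂` with `x < d₂`.
-/

open Finset

noncomputable def genFun (A : Set ℕ) (z : ℂ) : ℂ := ∑' s : A, z ^ (s : ℕ)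

theorem genFun_eq_tsum_indicator (A : Set ℕ) (z : ℂ) :
    genFun A z = ∑' s, A.indicator (z ^ ·) s :=
  tsum_subtype A (z ^ ·)

theorem IsPrimitiveRoot.sum_pow_pow_eq_ite {R : Type*} [CommRing R] [IsDomain R] {ζ : R} {d : ℕ}
    (hζ : IsPrimitiveRoot ζ d) (s : ℕ) :
    ∑ k ∈ range d, (ζ ^ k) ^ s = if d ∣ s then (d : R) else 0 := by
  simp only [pow_right_comm _ _ s]
  split_ifs with hds
  · simp [(hζ.pow_eq_one_iff_dvd s).2 hds]
  · have hne : 1 - ζ ^ s ≠ 0 := sub_ne_zero.2 (Ne.symm (mt (hζ.pow_eq_one_iff_dvd s).1 hds))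
    have hgeom := geom_sum_mul_neg (ζ ^ s) d
    rw [pow_right_comm, hζ.pow_eq_one, one_pow, sub_self] at hgeom
    exact (mul_eq_zero.1 hgeom).resolve_right hne

theorem IsPrimitiveRoot.norm_mul_pow {ζ : ℂ} {d : ℕ} (hζ : IsPrimitiveRoot ζ d) (hd : 0 < d)
    (z : ℂ) (k : ℕ) : ‖z * ζ ^ k‖ = ‖z‖ := by
  rw [norm_mul, norm_pow, hζ.norm'_eq_one hd.ne', one_pow, mul_one]

theorem injective_mul_add_mul_of_coprime {d₁ d₂ : ℕ} (hcop : d₁.Coprime d₂) :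
    Function.Injective fun p : Fin d₂ × ℕ ↦ (p.1 : ℕ) * d₁ + p.2 * d₂ := by
  rintro ⟨x₁, y₁⟩ ⟨x₂, y₂⟩ h
  simp only at h
  have hx : x₁ = x₂ := by
    have hmod : (x₁ : ℕ) * d₁ ≡ x₂ * d₁ [MOD d₂] := by
      simpa [Nat.ModEq, Nat.add_mul_mod_self_right] using congrArg (· % d₂) h
    exact Fin.ext (Nat.ModEq.eq_of_lt_of_lt (hmod.cancel_right_of_coprime hcop.symm) x₁.2 x₂.2)
  subst hx
  have hd₂ : 0 < d₂ := x₁.pos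
  simp [Nat.eq_of_mul_eq_mul_right hd₂ (by omega : y₁ * d₂ = y₂ * d₂)]

theorem range_mul_add_mul {d₁ d₂ : ℕ} (hd₂ : 0 < d₂) :
    Set.range (fun p : Fin d₂ × ℕ ↦ (p.1 : ℕ) * d₁ + p.2 * d₂) =
      {s | ∃ x y : ℕ, s = x * d₁ + y * d₂} := by
  ext s
  constructor
  · rintro ⟨⟨x, y⟩, rfl⟩
    exact ⟨x, y, rfl⟩
  · rintro ⟨x, y, rfl⟩
    refine ⟨(⟨x % d₂, Nat.mod_lt x hd₂⟩, y + x / d₂ * d₁), ?_⟩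
    dsimp only
    nlinarith [Nat.div_add_mod' x d₂]

section GenFun

variable {z : ℂ}

theorem norm_pow_lt_one (hz : ‖z‖ < 1) {d : ℕ} (hd : 0 < d) : ‖z ^ d‖ < 1 := by
  rw [norm_pow]; exact pow_lt_one₀ (norm_nonneg _) hz hd.ne'

theorem summable_indicator_pow (A : Set ℕ) (hz : ‖z‖ < 1) :
    Summable (A.indicator (z ^ ·)) :=
  (summable_geometric_of_norm_lt_one hz).indicator A

theorem genFun_sdiff {A B : Set ℕ} (hBA : B ⊆ A) (hz : ‖z‖ < 1) :
    genFun (A \ B) z = genFun A z - genFun B z := by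
  simp only [genFun_eq_tsum_indicator, Set.indicator_sdiff hBA, Pi.sub_apply]
  exact (summable_indicator_pow A hz).tsum_sub (summable_indicator_pow B hz)

theorem genFun_setOf_dvd {d : ℕ} (hd : 0 < d) (hz : ‖z‖ < 1) :
    genFun {s | d ∣ s} z = (1 - z ^ d)⁻¹ := by
  have hrange : Set.range (d * ·) = {s | d ∣ s} := by
    ext s; simp [Dvd.dvd, eq_comm]
  rw [genFun, ← hrange, tsum_range _ (mul_right_injective₀ hd.ne')]
  simp only [pow_mul]
  exact tsum_geometric_of_norm_lt_one (norm_pow_lt_one hz hd)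

theorem genFun_inter_setOf_dvd (A : Set ℕ) {ζ : ℂ} {d : ℕ} (hζ : IsPrimitiveRoot ζ d)
    (hd : 0 < d) (hz : ‖z‖ < 1) :
    genFun (A ∩ {s | d ∣ s}) z = (d : ℂ)⁻¹ * ∑ k ∈ range d, genFun A (z * ζ ^ k) := by
  have hterm (k s : ℕ) :
      A.indicator (fun s ↦ (z * ζ ^ k) ^ s) s = A.indicator (z ^ ·) s * (ζ ^ k) ^ s := by
    simp only [mul_pow]; exact Set.indicator_mul_left A _ _
  have hfilter : ∑ k ∈ range d, genFun A (z * ζ ^ k) = d * genFun (A ∩ {s | d ∣ s}) z := by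
    simp only [genFun_eq_tsum_indicator]
    rw [← Summable.tsum_finsetSum fun k _ ↦
      summable_indicator_pow A (by rwa [hζ.norm_mul_pow hd]), ← tsum_mul_left]
    refine tsum_congr fun s ↦ ?_
    rw [Set.inter_comm, ← Set.indicator_indicator]
    simp only [hterm, ← mul_sum, hζ.sum_pow_pow_eq_ite]
    by_cases hds : d ∣ s <;> simp [hds, mul_comm]
  rw [hfilter, inv_mul_cancel_left₀ (Nat.cast_ne_zero.2 hd.ne')]

theorem genFun_numericalSemigroup {d₁ d₂ : ℕ} (hd₁ : 0 < d₁) (hd₂ : 0 < d₂)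
    (hcop : d₁.Coprime d₂) (hz : ‖z‖ < 1) :
    genFun {s | ∃ x y : ℕ, s = x * d₁ + y * d₂} z =
      (1 - z ^ (d₁ * d₂)) / ((1 - z ^ d₁) * (1 - z ^ d₂)) := by
  have hne : 1 - z ^ d₁ ≠ 0 := sub_ne_zero.2 fun h ↦ by simpa [← h] using norm_pow_lt_one hz hd₁
  have hfinite : ∑ x ∈ range d₂, (z ^ d₁) ^ x = (1 - z ^ (d₁ * d₂)) / (1 - z ^ d₁) := by
    rw [eq_div_iff hne, geom_sum_mul_neg, pow_mul]
  have hzd₂ := norm_pow_lt_one hz hd₂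
  rw [genFun, ← range_mul_add_mul hd₂, tsum_range _ (injective_mul_add_mul_of_coprime hcop)]
  simp only [pow_add, pow_mul']
  rw [← tsum_mul_tsum_of_summable_norm (f := fun x : Fin d₂ ↦ (z ^ d₁) ^ (x : ℕ))
    (g := fun y ↦ (z ^ d₂) ^ y) Summable.of_finite
    (by simpa only [norm_pow] using summable_geometric_of_lt_one (norm_nonneg _) hzd₂),
    tsum_fintype, Fin.sum_univ_eq_sum_range (fun x ↦ (z ^ d₁) ^ x), hfinite,
    tsum_geometric_of_norm_lt_one hzd₂, ← pow_mul', ← div_eq_mul_inv, div_div]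

end GenFun

/-- Generating function of `Δ(d1,d2) ∩ S(d3)`: for coprime `d1, d2 ≥ 2`, `d3 > 0`,
`w = exp(2πi/d3)` and `|z| < 1`,
`Σ_{s} z^s = 1/(1 − z^{d3}) − (1/d3) Σ_{k=0}^{d3−1} H12(z w^k)`, where the sum
runs over positive `s` divisible by `d3` not in `S(d1,d2)`. -/
theorem generating_function_gap_intersection (d1 d2 d3 : ℕ)
    (h1 : 2 ≤ d1) (h2 : 2 ≤ d2) (hcop : Nat.Coprime d1 d2) (hd3 : 0 < d3)
    (w : ℂ) (hw : w = Complex.exp (2 * Real.pi * Complex.I / d3))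
    (H12 : ℂ → ℂ)
    (hH12 : ∀ u : ℂ, H12 u = (1 - u ^ (d1 * d2)) / ((1 - u ^ d1) * (1 - u ^ d2)))
    (z : ℂ) (hz : ‖z‖ < 1) :
    ∑' s : {s : ℕ | 0 < s ∧ d3 ∣ s ∧ ¬ ∃ x y : ℕ, s = x * d1 + y * d2},
        z ^ (s : ℕ) =
      1 / (1 - z ^ d3) -
        (d3 : ℂ)⁻¹ * ∑ k ∈ Finset.range d3, H12 (z * w ^ k) := by
  have hζ : IsPrimitiveRoot w d3 := hw ▸ Complex.isPrimitiveRoot_exp d3 hd3.ne'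
  set S : Set ℕ := {s | ∃ x y : ℕ, s = x * d1 + y * d2}
  have hgaps : {s : ℕ | 0 < s ∧ d3 ∣ s ∧ s ∉ S} = {s | d3 ∣ s} \ (S ∩ {s | d3 ∣ s}) := by
    have h0 : 0 ∈ S := ⟨0, 0, by simp⟩
    ext s
    simp only [Set.mem_ofPred_eq, Set.mem_sdiff, Set.mem_inter_iff]
    constructor
    · rintro ⟨-, hds, hs⟩
      exact ⟨hds, fun h ↦ hs h.1⟩
    · rintro ⟨hds, hs⟩
      exact ⟨Nat.pos_of_ne_zero (by rintro rfl; exact hs ⟨h0, hds⟩), hds, fun h ↦ hs ⟨h, hds⟩⟩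
  change genFun {s : ℕ | 0 < s ∧ d3 ∣ s ∧ s ∉ S} z = _
  rw [hgaps, genFun_sdiff Set.inter_subset_right hz, genFun_setOf_dvd hd3 hz,
    genFun_inter_setOf_dvd S hζ hd3 hz, one_div]
  congr 2
  refine sum_congr rfl fun k _ ↦ ?_
  rw [hH12, genFun_numericalSemigroup (by omega) (by omega) hcop (by rwa [hζ.norm_mul_pow hd3])]
end

section
/- Let d1, d2 be integers with 2 < d1 < d2 and gcd(d1,d2) = 1, let d3 be a positive integer with d3 ∉ S(d1,d2), set w = exp(2πi/d3), and let a33 = min{v ∈ ℕ : v ≥ 2, v·d3 ∈ S(d1,d2)}. Define, for real z with 0 < z < 1, Ψ3(z) = (1/d3) Σ_{k=0}^{d3−1} H12(z·w^k) − 1, where H12(z) = (1 − z^{d1·d2})/((1 − z^{d1})(1 − z^{d2})). Then Ψ3(z) is a positive real number for 0 < z < 1, and a33 = (1/d3)·lim_{z→0⁺} ln Ψ3(z)/ln z. -/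
/-!
Summing the geometric series, `H12(u) = ∑_{j<d2} ∑_m u^(j d1 + m d2)` for `‖u‖ < 1`. Averaging
over the `d3`-th roots of unity keeps exactly the exponents divisible by `d3`, so on `(0, 1)` the
function `Ψ3(z)` is the real series `∑ z^s` over the positive multiples `s` of `d3` in
`S(d1, d2)`. Since `d3 ∉ S(d1, d2)`, its lowest exponent is `a33 d3`, whence
`z^(a33 d3) ≤ Ψ3(z) ≤ C z^(a33 d3)` near `0`; taking logarithms gives the limit.
-/

open Complex Filter Topology

section Expansion

variable {𝕜 : Type*} [NormedField 𝕜]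

theorem pow_ne_one_of_norm_lt_one {u : 𝕜} (hu : ‖u‖ < 1) {n : ℕ} (hn : n ≠ 0) : u ^ n ≠ 1 :=
  fun h => (pow_lt_one₀ (norm_nonneg u) hu hn).ne (by rw [← norm_pow, h, norm_one])

theorem div_one_sub_pow_mul_one_sub_pow_eq_sum_tsum {a b : ℕ} (ha : a ≠ 0) (hb : b ≠ 0) {u : 𝕜}
    (hu : ‖u‖ < 1) :
    (1 - u ^ (a * b)) / ((1 - u ^ a) * (1 - u ^ b))
      = ∑ j ∈ Finset.range b, ∑' m : ℕ, u ^ (j * a + m * b) := by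
  have hub : ‖u ^ b‖ < 1 := by rw [norm_pow]; exact pow_lt_one₀ (norm_nonneg u) hu hb
  have hrow (j : ℕ) : ∑' m : ℕ, u ^ (j * a + m * b) = (u ^ a) ^ j * (1 - u ^ b)⁻¹ := by
    simp_rw [pow_add, mul_comm j, mul_comm _ b, pow_mul]
    rw [tsum_mul_left, tsum_geometric_of_norm_lt_one hub]
  simp_rw [hrow, ← Finset.sum_mul, geom_sum_eq (pow_ne_one_of_norm_lt_one hu ha), ← pow_mul]
  have hua : u ^ a - 1 ≠ 0 := sub_ne_zero.2 (pow_ne_one_of_norm_lt_one hu ha)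
  have hua' : 1 - u ^ a ≠ 0 := sub_ne_zero.2 (pow_ne_one_of_norm_lt_one hu ha).symm
  have hub' : 1 - u ^ b ≠ 0 := sub_ne_zero.2 (pow_ne_one_of_norm_lt_one hu hb).symm
  field_simp
  ring

theorem IsPrimitiveRoot.geom_sum_pow_eq_ite {ζ : 𝕜} {n : ℕ} (hζ : IsPrimitiveRoot ζ n) (s : ℕ) :
    ∑ k ∈ Finset.range n, (ζ ^ s) ^ k = if n ∣ s then (n : 𝕜) else 0 := by
  split_ifs with h
  · simp [(hζ.pow_eq_one_iff_dvd s).2 h]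
  · rw [geom_sum_eq (mt (hζ.pow_eq_one_iff_dvd s).1 h), ← pow_mul, mul_comm, pow_mul,
      hζ.pow_eq_one, one_pow, sub_self, zero_div]

theorem IsPrimitiveRoot.norm_eq_one_of_ne_zero {ζ : 𝕜} {n : ℕ} (hζ : IsPrimitiveRoot ζ n)
    (hn : n ≠ 0) : ‖ζ‖ = 1 :=
  (pow_eq_one_iff_of_nonneg (norm_nonneg ζ) hn).1 (by rw [← norm_pow, hζ.pow_eq_one, norm_one])

theorem IsPrimitiveRoot.sum_tsum_mul_pow_pow [CompleteSpace 𝕜] {ι : Type*} {ζ z : 𝕜} {n : ℕ}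
    (hζ : IsPrimitiveRoot ζ n) (hn : n ≠ 0) {e : ι → ℕ} (hs : Summable fun i => ‖z‖ ^ e i) :
    ∑ k ∈ Finset.range n, ∑' i, (z * ζ ^ k) ^ e i
      = n * ∑' i, if n ∣ e i then z ^ e i else 0 := by
  have hsum (k : ℕ) : Summable fun i => (z * ζ ^ k) ^ e i :=
    .of_norm (by simpa [norm_pow, norm_mul, hζ.norm_eq_one_of_ne_zero hn] using hs)
  rw [← Summable.tsum_finsetSum fun k _ => hsum k, ← tsum_mul_left]
  refine tsum_congr fun i => ?_
  simp_rw [mul_pow, ← pow_mul, mul_comm _ (e i), pow_mul, ← Finset.mul_sum,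
    hζ.geom_sum_pow_eq_ite]
  split_ifs <;> ring

end Expansion

/-- When `a` and `b` are coprime, every `s ∈ S(a,b)` is `j a + m b` for exactly one pair with
`j < b`, so this is `∑ z ^ s` over the positive multiples `s` of `n` in `S(a,b)`. -/
noncomputable def positiveMultiplesSeries (a b n : ℕ) (z : ℝ) : ℝ :=
  ∑ j ∈ Finset.range b, ∑' m : ℕ,
    if n ∣ j * a + m * b ∧ 0 < j * a + m * b then z ^ (j * a + m * b) else 0

section Series

variable {a b n : ℕ} {z : ℝ}

theorem summable_pow_add_mul (c : ℕ) (hb : b ≠ 0) (hz0 : 0 ≤ z) (hz1 : z < 1) :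
    Summable fun m : ℕ => z ^ (c + m * b) := by
  simp_rw [pow_add, mul_comm _ b, pow_mul]
  exact (summable_geometric_of_lt_one (by positivity) (pow_lt_one₀ hz0 hz1 hb)).mul_left _

theorem summable_ite_pow_add_mul (p : ℕ → Prop) [DecidablePred p] (c : ℕ) (hb : b ≠ 0)
    (hz0 : 0 ≤ z) (hz1 : z < 1) :
    Summable fun m : ℕ => if p m then z ^ (c + m * b) else 0 := by
  refine .of_nonneg_of_le (fun m => ?_) (fun m => ?_) (summable_pow_add_mul c hb hz0 hz1) <;>
    split_ifs <;> first | positivity | rfl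

theorem tsum_ite_dvd_pow_eq_add_ite (ha : a ≠ 0) (hb : b ≠ 0) (hz0 : 0 ≤ z) (hz1 : z < 1)
    (j : ℕ) :
    ∑' m : ℕ, (if n ∣ j * a + m * b then z ^ (j * a + m * b) else 0)
      = (∑' m : ℕ, if n ∣ j * a + m * b ∧ 0 < j * a + m * b then z ^ (j * a + m * b) else 0)
        + if j = 0 then 1 else 0 := by
  have hsplit : (fun m : ℕ => if n ∣ j * a + m * b then z ^ (j * a + m * b) else 0)
      = fun m => (if n ∣ j * a + m * b ∧ 0 < j * a + m * b then z ^ (j * a + m * b) else 0)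
        + if m = 0 then (if j = 0 then 1 else 0) else 0 := by
    funext m
    by_cases hj : j = 0 <;> by_cases hm : m = 0 <;> simp [hj, hm, ha, hb, Nat.pos_iff_ne_zero]
  rw [hsplit]
  exact ((summable_ite_pow_add_mul _ _ hb hz0 hz1).hasSum.add (hasSum_ite_eq 0 _)).tsum_eq

theorem inv_mul_sum_div_one_sub_pow_mul_one_sub_pow_sub_one {ζ : ℂ} (ha : a ≠ 0) (hb : b ≠ 0)
    (hn : n ≠ 0) (hζ : IsPrimitiveRoot ζ n) (hz0 : 0 ≤ z) (hz1 : z < 1) :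
    (n : ℂ)⁻¹ * (∑ k ∈ Finset.range n,
        (1 - ((z : ℂ) * ζ ^ k) ^ (a * b))
          / ((1 - ((z : ℂ) * ζ ^ k) ^ a) * (1 - ((z : ℂ) * ζ ^ k) ^ b)))
      - 1 = positiveMultiplesSeries a b n z := by
  have hnorm (k : ℕ) : ‖(z : ℂ) * ζ ^ k‖ = z := by
    rw [norm_mul, norm_pow, hζ.norm'_eq_one hn, one_pow, mul_one, Complex.norm_real,
      Real.norm_of_nonneg hz0]
  have hsum (j : ℕ) : Summable fun m : ℕ => ‖(z : ℂ)‖ ^ (j * a + m * b) := by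
    simpa [Complex.norm_real, Real.norm_of_nonneg hz0]
      using summable_pow_add_mul (j * a) hb hz0 hz1
  simp_rw [div_one_sub_pow_mul_one_sub_pow_eq_sum_tsum ha hb ((hnorm _).trans_lt hz1)]
  rw [Finset.sum_comm, Finset.sum_congr rfl fun j _ =>
      hζ.sum_tsum_mul_pow_pow (e := fun m => j * a + m * b) hn (hsum j),
    ← Finset.mul_sum, inv_mul_cancel_left₀ (Nat.cast_ne_zero.2 hn)]
  have hreal : ∑ j ∈ Finset.range b, ∑' m : ℕ,
      (if n ∣ j * a + m * b then z ^ (j * a + m * b) else 0)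
        = 1 + positiveMultiplesSeries a b n z := by
    simp_rw [tsum_ite_dvd_pow_eq_add_ite ha hb hz0 hz1, Finset.sum_add_distrib,
      Finset.sum_ite_eq', Finset.mem_range, Nat.pos_of_ne_zero hb, if_true,
      positiveMultiplesSeries, add_comm]
  have hcast : ∑ j ∈ Finset.range b, ∑' m : ℕ,
      (if n ∣ j * a + m * b then (z : ℂ) ^ (j * a + m * b) else 0)
        = ((∑ j ∈ Finset.range b, ∑' m : ℕ,
          (if n ∣ j * a + m * b then z ^ (j * a + m * b) else 0) : ℝ) : ℂ) := by
    simp [Complex.ofReal_sum, Complex.ofReal_tsum, apply_ite]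
  rw [hcast, hreal]
  push_cast
  ring

theorem pow_le_positiveMultiplesSeries {j m : ℕ} (hj : j < b) (hdvd : n ∣ j * a + m * b)
    (hpos : 0 < j * a + m * b) (hz0 : 0 ≤ z) (hz1 : z < 1) :
    z ^ (j * a + m * b) ≤ positiveMultiplesSeries a b n z := by
  have hnonneg (i k : ℕ) :
      0 ≤ if n ∣ i * a + k * b ∧ 0 < i * a + k * b then z ^ (i * a + k * b) else 0 := by
    split_ifs <;> positivity
  calc z ^ (j * a + m * b)
      = if n ∣ j * a + m * b ∧ 0 < j * a + m * b then z ^ (j * a + m * b) else 0 :=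
        (if_pos ⟨hdvd, hpos⟩).symm
    _ ≤ ∑' k : ℕ, if n ∣ j * a + k * b ∧ 0 < j * a + k * b then z ^ (j * a + k * b) else 0 :=
        (summable_ite_pow_add_mul _ _ (by omega) hz0 hz1).le_tsum m fun k _ => hnonneg j k
    _ ≤ positiveMultiplesSeries a b n z :=
        Finset.single_le_sum (fun i _ => tsum_nonneg (hnonneg i)) (Finset.mem_range.2 hj)

theorem positiveMultiplesSeries_mul_pow_le {N : ℕ} (hb : b ≠ 0)
    (hN : ∀ j m, n ∣ j * a + m * b → 0 < j * a + m * b → N ≤ j * a + m * b) {y : ℝ}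
    (hz0 : 0 ≤ z) (hzy : z ≤ y) (hy1 : y < 1) :
    positiveMultiplesSeries a b n z * y ^ N ≤ positiveMultiplesSeries a b n y * z ^ N := by
  have hy0 : 0 ≤ y := hz0.trans hzy
  unfold positiveMultiplesSeries
  simp_rw [Finset.sum_mul, ← tsum_mul_right]
  refine Finset.sum_le_sum fun j _ => Summable.tsum_le_tsum (fun m => ?_)
    ((summable_ite_pow_add_mul _ _ hb hz0 (hzy.trans_lt hy1)).mul_right _)
    ((summable_ite_pow_add_mul _ _ hb hy0 hy1).mul_right _)
  split_ifs with h
  · obtain ⟨k, hk⟩ := Nat.exists_eq_add_of_le (hN j m h.1 h.2)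
    rw [hk, pow_add, pow_add]
    calc z ^ N * z ^ k * y ^ N = z ^ k * (z ^ N * y ^ N) := by ring
      _ ≤ y ^ k * (z ^ N * y ^ N) := by gcongr
      _ = y ^ N * y ^ k * z ^ N := by ring
  · simp

end Series

theorem tendsto_log_div_log_of_le_of_le {f : ℝ → ℝ} {c C : ℝ} {N : ℕ} (hc : 0 < c)
    (hlow : ∀ᶠ z in 𝓝[>] 0, c * z ^ N ≤ f z) (hup : ∀ᶠ z in 𝓝[>] 0, f z ≤ C * z ^ N) :
    Tendsto (fun z => Real.log (f z) / Real.log z) (𝓝[>] 0) (𝓝 N) := by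
  have hlim (K : ℝ) : Tendsto (fun z => N + Real.log K / Real.log z) (𝓝[>] 0) (𝓝 N) := by
    simpa using tendsto_const_nhds.add
      (tendsto_const_nhds.div_atBot Real.tendsto_log_nhdsGT_zero (a := Real.log K))
  have hunit : ∀ᶠ z : ℝ in 𝓝[>] 0, z ∈ Set.Ioo 0 1 := Ioo_mem_nhdsGT one_pos
  -- `log z < 0` reverses the inequalities `log (c z^N) ≤ log (f z) ≤ log (C z^N)`
  refine tendsto_of_tendsto_of_tendsto_of_le_of_le' (hlim C) (hlim c) ?_ ?_
  · filter_upwards [hunit, hlow, hup] with z ⟨hz0, hz1⟩ hl hu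
    have hlog := Real.log_neg hz0 hz1
    have hf : 0 < f z := lt_of_lt_of_le (by positivity) hl
    have hC : 0 < C := pos_of_mul_pos_left (hf.trans_le hu) (by positivity)
    have := Real.log_le_log hf hu
    rw [Real.log_mul hC.ne' (by positivity), Real.log_pow] at this
    rw [le_div_iff_of_neg hlog, add_mul, div_mul_cancel₀ _ hlog.ne]
    linarith
  · filter_upwards [hunit, hlow] with z ⟨hz0, hz1⟩ hl
    have hlog := Real.log_neg hz0 hz1
    have := Real.log_le_log (by positivity) hl
    rw [Real.log_mul hc.ne' (by positivity), Real.log_pow] at this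
    rw [div_le_iff_of_neg hlog, add_mul, div_mul_cancel₀ _ hlog.ne]
    linarith

section Semigroup

variable {a b n : ℕ}

theorem exists_add_mul_eq_of_lt (hb : b ≠ 0) (x y : ℕ) :
    ∃ j m, j < b ∧ j * a + m * b = x * a + y * b :=
  ⟨x % b, y + x / b * a, Nat.mod_lt x (Nat.pos_of_ne_zero hb), by
    nth_rw 3 [← Nat.mod_add_div x b]; ring⟩

theorem sInf_mul_le_of_dvd (hnot : ¬ ∃ x y : ℕ, n = x * a + y * b) {x y : ℕ}
    (hdvd : n ∣ x * a + y * b) (hpos : 0 < x * a + y * b) :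
    sInf {v : ℕ | 2 ≤ v ∧ ∃ x y : ℕ, v * n = x * a + y * b} * n ≤ x * a + y * b := by
  obtain ⟨v, hv⟩ := hdvd
  have hv2 : 2 ≤ v := by
    rcases v with _ | _ | v
    · omega
    · exact absurd ⟨x, y, by simpa using hv.symm⟩ hnot
    · omega
  rw [hv, mul_comm n]
  exact Nat.mul_le_mul_right n (Nat.sInf_le ⟨hv2, x, y, by rw [mul_comm]; exact hv.symm⟩)

end Semigroup

theorem a33_from_hilbert_series_general (d1 d2 d3 : ℕ) (h1 : 2 < d1) (h2 : d1 < d2)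
    (hd3 : 0 < d3)
    (hnot : ¬ ∃ x y : ℕ, d3 = x * d1 + y * d2) (a33 : ℕ)
    (ha33 : a33 = sInf {v : ℕ | 2 ≤ v ∧ ∃ x y : ℕ, v * d3 = x * d1 + y * d2})
    (w : ℂ) (hw : w = Complex.exp (2 * Real.pi * Complex.I / d3))
    (H12 : ℂ → ℂ)
    (hH12 : ∀ u : ℂ, H12 u = (1 - u ^ (d1 * d2)) / ((1 - u ^ d1) * (1 - u ^ d2)))
    (Ψ3 : ℝ → ℂ)
    (hΨ3 : ∀ z : ℝ,
      Ψ3 z = (d3 : ℂ)⁻¹ * (∑ k ∈ Finset.range d3, H12 ((z : ℂ) * w ^ k)) - 1) :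
    (∀ z : ℝ, 0 < z → z < 1 → (Ψ3 z).im = 0 ∧ 0 < (Ψ3 z).re) ∧
    Tendsto (fun z : ℝ => Real.log (Ψ3 z).re / Real.log z) (𝓝[>] 0)
      (𝓝 ((a33 * d3 : ℕ) : ℝ)) := by
  have hd2 : d2 ≠ 0 := by omega
  set T := positiveMultiplesSeries d1 d2 d3
  have hrepr (z : ℝ) (hz0 : 0 < z) (hz1 : z < 1) : Ψ3 z = T z := by
    simp only [hΨ3, hH12]
    exact inv_mul_sum_div_one_sub_pow_mul_one_sub_pow_sub_one (by omega) hd2 hd3.ne'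
      (hw ▸ Complex.isPrimitiveRoot_exp d3 hd3.ne') hz0.le hz1
  obtain ⟨ha2, x, y, hxy⟩ : a33 ∈ {v : ℕ | 2 ≤ v ∧ ∃ x y : ℕ, v * d3 = x * d1 + y * d2} :=
    ha33 ▸ Nat.sInf_mem ⟨d1, by omega, d3, 0, by ring⟩
  obtain ⟨j, m, hj, hjm⟩ := exists_add_mul_eq_of_lt hd2 x y
  rw [← hjm] at hxy
  have hlow (z : ℝ) (hz0 : 0 < z) (hz1 : z < 1) : z ^ (a33 * d3) ≤ T z :=
    hxy ▸ pow_le_positiveMultiplesSeries hj (hxy ▸ dvd_mul_left d3 a33)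
      (hxy ▸ Nat.mul_pos (by omega) hd3) hz0.le hz1
  have hup (z : ℝ) (hz0 : 0 < z) (hz1 : z ≤ 1 / 2) :
      T z ≤ T (1 / 2) / (1 / 2) ^ (a33 * d3) * z ^ (a33 * d3) := by
    rw [div_mul_eq_mul_div, le_div_iff₀ (by positivity)]
    exact positiveMultiplesSeries_mul_pow_le hd2
      (fun j m hdvd hpos => ha33 ▸ sInf_mul_le_of_dvd hnot hdvd hpos) hz0.le hz1 (by norm_num)
  refine ⟨fun z hz0 hz1 => ?_, ?_⟩
  · rw [hrepr z hz0 hz1, Complex.ofReal_im, Complex.ofReal_re]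
    exact ⟨rfl, (pow_pos hz0 _).trans_le (hlow z hz0 hz1)⟩
  · have hnear : ∀ᶠ z : ℝ in 𝓝[>] 0, z ∈ Set.Ioc 0 (1 / 2) := Ioc_mem_nhdsGT (by norm_num)
    have hre (z : ℝ) (hz : z ∈ Set.Ioc 0 (1 / 2)) : (Ψ3 z).re = T z := by
      rw [hrepr z hz.1 (by linarith [hz.2]), Complex.ofReal_re]
    refine tendsto_log_div_log_of_le_of_le (C := T (1 / 2) / (1 / 2) ^ (a33 * d3)) one_pos ?_ ?_
    · filter_upwards [hnear] with z hz
      rw [one_mul, hre z hz]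
      exact hlow z hz.1 (by linarith [hz.2])
    · filter_upwards [hnear] with z hz
      rw [hre z hz]
      exact hup z hz.1 hz.2

/-- Analytic representation of `a33`: for `2 < d1 < d2` coprime, `d3 ∉ S(d1,d2)`
positive, `w = exp(2πi/d3)` and `Ψ3(z) = (1/d3) Σ_{k=0}^{d3−1} H12(z w^k) − 1`
(with `H12` the Hilbert series of `S(d1,d2)`), the function `Ψ3` takes positive
real values on `(0,1)` and `a33·d3 = lim_{z→0⁺} ln Ψ3(z)/ln z`. -/
theorem a33_from_hilbert_series (d1 d2 d3 : ℕ) (h1 : 2 < d1) (h2 : d1 < d2)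
    (hcop : Nat.Coprime d1 d2) (hd3 : 0 < d3)
    (hnot : ¬ ∃ x y : ℕ, d3 = x * d1 + y * d2) (a33 : ℕ)
    (ha33 : a33 = sInf {v : ℕ | 2 ≤ v ∧ ∃ x y : ℕ, v * d3 = x * d1 + y * d2})
    (w : ℂ) (hw : w = Complex.exp (2 * Real.pi * Complex.I / d3))
    (H12 : ℂ → ℂ)
    (hH12 : ∀ u : ℂ, H12 u = (1 - u ^ (d1 * d2)) / ((1 - u ^ d1) * (1 - u ^ d2)))
    (Ψ3 : ℝ → ℂ)
    (hΨ3 : ∀ z : ℝ,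
      Ψ3 z = (d3 : ℂ)⁻¹ * (∑ k ∈ Finset.range d3, H12 ((z : ℂ) * w ^ k)) - 1) :
    (∀ z : ℝ, 0 < z → z < 1 → (Ψ3 z).im = 0 ∧ 0 < (Ψ3 z).re) ∧
    Tendsto (fun z : ℝ => Real.log (Ψ3 z).re / Real.log z) (𝓝[>] 0)
      (𝓝 ((a33 * d3 : ℕ) : ℝ)) :=
  a33_from_hilbert_series_general d1 d2 d3 h1 h2 hd3 hnot a33 ha33 w hw H12 hH12 Ψ3 hΨ3
end

section
/- Let d1, d2, d3 and a_{ij} (1 ≤ i, j ≤ 3, i ≠ j allowed, with diagonal entries a_{11}, a_{22}, a_{33}) be positive integers satisfying the minimal relations a_{11}d1 = a_{12}d2 + a_{13}d3, a_{22}d2 = a_{21}d1 + a_{23}d3, a_{33}d3 = a_{31}d1 + a_{32}d2, together with Johnson's identities a_{21} + a_{31} = a_{11}, a_{12} + a_{32} = a_{22}, a_{13} + a_{23} = a_{33}, a_{23}a_{32} = a_{22}a_{33} − d1, a_{13}a_{31} = a_{11}a_{33} − d2, a_{12}a_{21} = a_{11}a_{22} − d3. Then, writing ⟨a,d⟩ =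 a_{11}d1 + a_{22}d2 + a_{33}d3, one has ⟨a,d⟩² − 4(a_{11}a_{22}d1d2 + a_{22}a_{33}d2d3 + a_{33}a_{11}d3d1) + 4·d1·d2·d3 = (a_{12}a_{23}a_{31} − a_{13}a_{32}a_{21})². -/
theorem johnson_discriminant_general (d1 d2 d3 a11 a12 a13 a21 a22 a23 a31 a32 a33 : ℤ)
    (hc1 : a21 + a31 = a11) (hc2 : a12 + a32 = a22) (hc3 : a13 + a23 = a33)
    (hp1 : a23 * a32 = a22 * a33 - d1)
    (hp2 : a13 * a31 = a11 * a33 - d2)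
    (hp3 : a12 * a21 = a11 * a22 - d3) :
    (a11 * d1 + a22 * d2 + a33 * d3) ^ 2 -
        4 * (a11 * a22 * d1 * d2 + a22 * a33 * d2 * d3 + a33 * a11 * d3 * d1) +
        4 * d1 * d2 * d3 =
      (a12 * a23 * a31 - a13 * a32 * a21) ^ 2 := by
  -- Each `dᵢ` is a 2×2 minor of Johnson's matrix and each diagonal entry a column sum,
  -- so the claim becomes a polynomial identity in the six off-diagonal entries.
  obtain rfl : d1 = a22 * a33 - a23 * a32 := by linarith
  obtain rfl : d2 = a11 * a33 - a13 * a31 := by linarith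
  obtain rfl : d3 = a11 * a22 - a12 * a21 := by linarith
  subst hc1 hc2 hc3
  ring

/-- The common discriminant of the six quadratic equations for the off-diagonal
entries of Johnson's matrix equals `(a12 a23 a31 − a13 a32 a21)²`. -/
theorem johnson_discriminant (d1 d2 d3 a11 a12 a13 a21 a22 a23 a31 a32 a33 : ℤ)
    (hd1 : 0 < d1) (hd2 : 0 < d2) (hd3 : 0 < d3)
    (ha11 : 0 < a11) (ha12 : 0 < a12) (ha13 : 0 < a13)
    (ha21 : 0 < a21) (ha22 : 0 < a22) (ha23 : 0 < a23)
    (ha31 : 0 < a31) (ha32 : 0 < a32) (ha33 : 0 < a33)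
    (hr1 : a11 * d1 = a12 * d2 + a13 * d3)
    (hr2 : a22 * d2 = a21 * d1 + a23 * d3)
    (hr3 : a33 * d3 = a31 * d1 + a32 * d2)
    (hc1 : a21 + a31 = a11) (hc2 : a12 + a32 = a22) (hc3 : a13 + a23 = a33)
    (hp1 : a23 * a32 = a22 * a33 - d1)
    (hp2 : a13 * a31 = a11 * a33 - d2)
    (hp3 : a12 * a21 = a11 * a22 - d3) :
    (a11 * d1 + a22 * d2 + a33 * d3) ^ 2 -
        4 * (a11 * a22 * d1 * d2 + a22 * a33 * d2 * d3 + a33 * a11 * d3 * d1) +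
        4 * d1 * d2 * d3 =
      (a12 * a23 * a31 - a13 * a32 * a21) ^ 2 :=
  johnson_discriminant_general d1 d2 d3 a11 a12 a13 a21 a22 a23 a31 a32 a33 hc1 hc2 hc3 hp1 hp2 hp3
end

section
/- Let d1, d2, d3 and a_{ij} be positive integers satisfying a_{11}d1 = a_{12}d2 + a_{13}d3, a_{22}d2 = a_{21}d1 + a_{23}d3, a_{33}d3 = a_{31}d1 + a_{32}d2, a_{21} + a_{31} = a_{11}, a_{12} + a_{32} = a_{22}, a_{13} + a_{23} = a_{33}, a_{23}a_{32} = a_{22}a_{33} − d1, a_{13}a_{31} = a_{11}a_{33} − d2, a_{12}a_{21} = a_{11}a_{22} − d3, and write ⟨a,d⟩ = a_{11}d1 + a_{22}d2 + a_{33}d3. Then the six off-diagonal entries satisfy the six quadratic equations: d3·a_{23}² − (⟨a,d⟩ − 2a_{11}d1)·a_{23} + (a_{22}a_{33} − d1)·d2 = 0; d2·a_{32}² − (⟨a,d⟩ − 2a_{11}d1)·a_{32} + (a_{22}a_{33} − d1)·d3 = 0; d3·a_{13}² − (⟨a,d⟩ − 2a_{22}d2)·a_{13} + (a_{11}a_{33}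 − d2)·d1 = 0; d1·a_{31}² − (⟨a,d⟩ − 2a_{22}d2)·a_{31} + (a_{11}a_{33} − d2)·d3 = 0; d2·a_{12}² − (⟨a,d⟩ − 2a_{33}d3)·a_{12} + (a_{11}a_{22} − d3)·d1 = 0; d1·a_{21}² − (⟨a,d⟩ − 2a_{33}d3)·a_{21} + (a_{11}a_{22} − d3)·d2 = 0. -/
/-!
Subtracting the first relation and the column identities turns the linear coefficient
`⟨a,d⟩ - 2 a₁₁d₁` into `a₃₂d₂ + a₂₃d₃`, while the product identity turns the constant term into
`a₂₃a₃₂d₂` (resp. `a₂₃a₃₂d₃`). The first quadratic is then `(d₃x - a₃₂d₂)(x - a₂₃)`, which vanishes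
at `x = a₂₃`, and the second is `(d₂y - a₂₃d₃)(y - a₃₂)`. The other two pairs are the same
statement with the indices permuted.
-/

theorem johnson_row_quadratics {R : Type*} [CommRing R]
    {d1 d2 d3 a11 a12 a13 a22 a23 a32 a33 σ : R}
    (hr : a11 * d1 = a12 * d2 + a13 * d3)
    (hc2 : a12 + a32 = a22) (hc3 : a13 + a23 = a33)
    (hp : a23 * a32 = a22 * a33 - d1)
    (hσ : a11 * d1 + a22 * d2 + a33 * d3 = σ) :
    d3 * a23 ^ 2 - (σ - 2 * a11 * d1) * a23 + (a22 * a33 - d1) * d2 = 0 ∧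
    d2 * a32 ^ 2 - (σ - 2 * a11 * d1) * a32 + (a22 * a33 - d1) * d3 = 0 := by
  have hcoef : σ - 2 * a11 * d1 = a32 * d2 + a23 * d3 := by
    linear_combination -hσ - hr - d2 * hc2 - d3 * hc3
  rw [hcoef, ← hp]
  constructor <;> ring

theorem johnson_offdiagonal_quadratics_general
    (d1 d2 d3 a11 a12 a13 a21 a22 a23 a31 a32 a33 : ℤ)
    (hr1 : a11 * d1 = a12 * d2 + a13 * d3)
    (hr2 : a22 * d2 = a21 * d1 + a23 * d3)
    (hr3 : a33 * d3 = a31 * d1 + a32 * d2)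
    (hc1 : a21 + a31 = a11) (hc2 : a12 + a32 = a22) (hc3 : a13 + a23 = a33)
    (hp1 : a23 * a32 = a22 * a33 - d1)
    (hp2 : a13 * a31 = a11 * a33 - d2)
    (hp3 : a12 * a21 = a11 * a22 - d3) :
    d3 * a23 ^ 2 - (a11 * d1 + a22 * d2 + a33 * d3 - 2 * a11 * d1) * a23 +
        (a22 * a33 - d1) * d2 = 0 ∧
    d2 * a32 ^ 2 - (a11 * d1 + a22 * d2 + a33 * d3 - 2 * a11 * d1) * a32 +
        (a22 * a33 - d1) * d3 = 0 ∧
    d3 * a13 ^ 2 - (a11 * d1 + a22 * d2 + a33 * d3 - 2 * a22 * d2) * a13 +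
        (a11 * a33 - d2) * d1 = 0 ∧
    d1 * a31 ^ 2 - (a11 * d1 + a22 * d2 + a33 * d3 - 2 * a22 * d2) * a31 +
        (a11 * a33 - d2) * d3 = 0 ∧
    d2 * a12 ^ 2 - (a11 * d1 + a22 * d2 + a33 * d3 - 2 * a33 * d3) * a12 +
        (a11 * a22 - d3) * d1 = 0 ∧
    d1 * a21 ^ 2 - (a11 * d1 + a22 * d2 + a33 * d3 - 2 * a33 * d3) * a21 +
        (a11 * a22 - d3) * d2 = 0 := by
  obtain ⟨h23, h32⟩ := johnson_row_quadratics hr1 hc2 hc3 hp1 rfl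
  obtain ⟨h13, h31⟩ := johnson_row_quadratics hr2 hc1 (by linear_combination hc3) hp2
    (σ := a11 * d1 + a22 * d2 + a33 * d3) (by ring)
  obtain ⟨h12, h21⟩ := johnson_row_quadratics hr3 (by linear_combination hc1)
    (by linear_combination hc2) hp3 (σ := a11 * d1 + a22 * d2 + a33 * d3) (by ring)
  exact ⟨h23, h32, h13, h31, h12, h21⟩

/-- The six off-diagonal entries of Johnson's matrix satisfy the six quadratic
equations with coefficients built from the diagonal entries and `d1, d2, d3`. -/
theorem johnson_offdiagonal_quadratics
    (d1 d2 d3 a11 a12 a13 a21 a22 a23 a31 a32 a33 : ℤ)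
    (hd1 : 0 < d1) (hd2 : 0 < d2) (hd3 : 0 < d3)
    (ha11 : 0 < a11) (ha12 : 0 < a12) (ha13 : 0 < a13)
    (ha21 : 0 < a21) (ha22 : 0 < a22) (ha23 : 0 < a23)
    (ha31 : 0 < a31) (ha32 : 0 < a32) (ha33 : 0 < a33)
    (hr1 : a11 * d1 = a12 * d2 + a13 * d3)
    (hr2 : a22 * d2 = a21 * d1 + a23 * d3)
    (hr3 : a33 * d3 = a31 * d1 + a32 * d2)
    (hc1 : a21 + a31 = a11) (hc2 : a12 + a32 = a22) (hc3 : a13 + a23 = a33)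
    (hp1 : a23 * a32 = a22 * a33 - d1)
    (hp2 : a13 * a31 = a11 * a33 - d2)
    (hp3 : a12 * a21 = a11 * a22 - d3) :
    d3 * a23 ^ 2 - (a11 * d1 + a22 * d2 + a33 * d3 - 2 * a11 * d1) * a23 +
        (a22 * a33 - d1) * d2 = 0 ∧
    d2 * a32 ^ 2 - (a11 * d1 + a22 * d2 + a33 * d3 - 2 * a11 * d1) * a32 +
        (a22 * a33 - d1) * d3 = 0 ∧
    d3 * a13 ^ 2 - (a11 * d1 + a22 * d2 + a33 * d3 - 2 * a22 * d2) * a13 +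
        (a11 * a33 - d2) * d1 = 0 ∧
    d1 * a31 ^ 2 - (a11 * d1 + a22 * d2 + a33 * d3 - 2 * a22 * d2) * a31 +
        (a11 * a33 - d2) * d3 = 0 ∧
    d2 * a12 ^ 2 - (a11 * d1 + a22 * d2 + a33 * d3 - 2 * a33 * d3) * a12 +
        (a11 * a22 - d3) * d1 = 0 ∧
    d1 * a21 ^ 2 - (a11 * d1 + a22 * d2 + a33 * d3 - 2 * a33 * d3) * a21 +
        (a11 * a22 - d3) * d2 = 0 :=
  johnson_offdiagonal_quadratics_general d1 d2 d3 a11 a12 a13 a21 a22 a23 a31 a32 a33 hr1 hr2 hr3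
    hc1 hc2 hc3 hp1 hp2 hp3
end

section
/- Let d1, d2, d3 and a_{ij} be positive integers satisfying a_{11}d1 = a_{12}d2 + a_{13}d3, a_{22}d2 = a_{21}d1 + a_{23}d3, a_{33}d3 = a_{31}d1 + a_{32}d2, a_{21} + a_{31} = a_{11}, a_{12} + a_{32} = a_{22}, a_{13} + a_{23} = a_{33}, a_{23}a_{32} = a_{22}a_{33} − d1, a_{13}a_{31} = a_{11}a_{33} − d2, a_{12}a_{21} = a_{11}a_{22} − d3. Then |a_{23}d3 − a_{32}d2| = |a_{31}d1 − a_{13}d3| = |a_{12}d2 − a_{21}d1| = |a_{12}a_{23}a_{31} − a_{13}a_{32}a_{21}|. -/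
section Johnson

variable {R : Type*} [CommRing R]

theorem sub_eq_sub_of_row_relation {aii aij aik aji aki di dj dk : R}
    (hrow : aii * di = aij * dj + aik * dk) (hcol : aji + aki = aii) :
    aki * di - aik * dk = aij * dj - aji * di := by
  linear_combination hrow + di * hcol

/- Substituting `d1 = a22 a33 - a23 a32` and `d2 = a11 a33 - a13 a31`, the column sums turn
`a12 a11 - a21 a22` into `a12 a31 - a21 a32` and `a33 - a13`, `a33 - a23` into `a23`, `a13`. -/
theorem sub_eq_J_of_product_relations {a11 a12 a13 a21 a22 a23 a31 a32 a33 d1 d2 : R}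
    (hc1 : a21 + a31 = a11) (hc2 : a12 + a32 = a22) (hc3 : a13 + a23 = a33)
    (hp1 : a23 * a32 = a22 * a33 - d1) (hp2 : a13 * a31 = a11 * a33 - d2) :
    a12 * d2 - a21 * d1 = a12 * a23 * a31 - a13 * a32 * a21 := by
  linear_combination (-a21) * hp1 + a12 * hp2 - a12 * a33 * hc1 + a21 * a33 * hc2 +
    (a21 * a32 - a12 * a31) * hc3

end Johnson

theorem johnson_J_identities_general
    (d1 d2 d3 a11 a12 a13 a21 a22 a23 a31 a32 a33 : ℤ)
    (hr2 : a22 * d2 = a21 * d1 + a23 * d3)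
    (hr3 : a33 * d3 = a31 * d1 + a32 * d2)
    (hc1 : a21 + a31 = a11) (hc2 : a12 + a32 = a22) (hc3 : a13 + a23 = a33)
    (hp1 : a23 * a32 = a22 * a33 - d1)
    (hp2 : a13 * a31 = a11 * a33 - d2) :
    |a23 * d3 - a32 * d2| = |a31 * d1 - a13 * d3| ∧
    |a31 * d1 - a13 * d3| = |a12 * d2 - a21 * d1| ∧
    |a12 * d2 - a21 * d1| = |a12 * a23 * a31 - a13 * a32 * a21| := by
  have h3 : a23 * d3 - a32 * d2 = a31 * d1 - a13 * d3 := sub_eq_sub_of_row_relation hr3 hc3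
  have h2 : a32 * d2 - a23 * d3 = a21 * d1 - a12 * d2 := sub_eq_sub_of_row_relation hr2 hc2
  refine ⟨by rw [h3], ?_, by rw [sub_eq_J_of_product_relations hc1 hc2 hc3 hp1 hp2]⟩
  rw [← h3, abs_sub_comm, h2, abs_sub_comm]

/-- The quantity `J = |a12 a23 a31 − a13 a32 a21|` coincides with
`|a23 d3 − a32 d2| = |a31 d1 − a13 d3| = |a12 d2 − a21 d1|` for the entries of
Johnson's matrix. -/
theorem johnson_J_identities
    (d1 d2 d3 a11 a12 a13 a21 a22 a23 a31 a32 a33 : ℤ)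
    (hd1 : 0 < d1) (hd2 : 0 < d2) (hd3 : 0 < d3)
    (ha11 : 0 < a11) (ha12 : 0 < a12) (ha13 : 0 < a13)
    (ha21 : 0 < a21) (ha22 : 0 < a22) (ha23 : 0 < a23)
    (ha31 : 0 < a31) (ha32 : 0 < a32) (ha33 : 0 < a33)
    (hr1 : a11 * d1 = a12 * d2 + a13 * d3)
    (hr2 : a22 * d2 = a21 * d1 + a23 * d3)
    (hr3 : a33 * d3 = a31 * d1 + a32 * d2)
    (hc1 : a21 + a31 = a11) (hc2 : a12 + a32 = a22) (hc3 : a13 + a23 = a33)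
    (hp1 : a23 * a32 = a22 * a33 - d1)
    (hp2 : a13 * a31 = a11 * a33 - d2)
    (hp3 : a12 * a21 = a11 * a22 - d3) :
    |a23 * d3 - a32 * d2| = |a31 * d1 - a13 * d3| ∧
    |a31 * d1 - a13 * d3| = |a12 * d2 - a21 * d1| ∧
    |a12 * d2 - a21 * d1| = |a12 * a23 * a31 - a13 * a32 * a21| :=
  johnson_J_identities_general d1 d2 d3 a11 a12 a13 a21 a22 a23 a31 a32 a33 hr2 hr3 hc1 hc2 hc3 hp1
    hp2
end
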